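/- The function τ ↦ τ · cot τ is decreasing and concave on (0, π/2). -/

import Mathlib

/-!
With `f τ = τ cos τ / sin τ` one computes `f' τ = (sin τ cos τ - τ) / sin² τ` and
`f'' τ = 2 (τ cos τ - sin τ) / sin³ τ`. On `(0, π)` both numerators are negative: the first because
`sin τ cos τ = sin (2τ) / 2 < τ`, the second because `τ < tan τ` below `π / 2` and `cos τ ≤ 0` above.
So `f` is strictly decreasing and strictly concave on all of `(0, π)`.
-/

open Real Set

section

variable {U : Set ℝ} {f f' : ℝ → ℝ}

lemma strictAntiOn_of_hasDerivAt_neg (hU : Convex ℝ U) (hf : ∀ x ∈ U, HasDerivAt f (f' x) x)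
    (hf' : ∀ x ∈ U, f' x < 0) : StrictAntiOn f U :=
  strictAntiOn_of_hasDerivWithinAt_neg hU (fun x hx => (hf x hx).continuousAt.continuousWithinAt)
    (fun x hx => (hf x (interior_subset hx)).hasDerivWithinAt) fun x hx => hf' x (interior_subset hx)

lemma StrictAntiOn.strictConcaveOn_of_hasDerivAt (hU : Convex ℝ U)
    (hf : ∀ x ∈ U, HasDerivAt f (f' x) x) (hf' : StrictAntiOn f' U) : StrictConcaveOn ℝ U f :=
  StrictAntiOn.strictConcaveOn_of_deriv hU (fun x hx => (hf x hx).continuousAt.continuousWithinAt)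
    ((hf'.mono interior_subset).congr fun x hx => (hf x (interior_subset hx)).deriv.symm)

end

lemma sin_mul_cos_lt_self {x : ℝ} (hx : 0 < x) : sin x * cos x < x := by
  have h := sin_lt (by positivity : 0 < 2 * x)
  rw [sin_two_mul] at h
  linarith

lemma mul_cos_lt_sin {x : ℝ} (h0 : 0 < x) (hπ : x < π) : x * cos x < sin x := by
  have hsin : 0 < sin x := sin_pos_of_pos_of_lt_pi h0 hπ
  rcases lt_or_ge x (π / 2) with hx | hx
  · have hcos : 0 < cos x := cos_pos_of_mem_Ioo ⟨by linarith, hx⟩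
    have htan := lt_tan h0 hx
    rwa [tan_eq_sin_div_cos, lt_div_iff₀ hcos] at htan
  · have hcos : cos x ≤ 0 := cos_nonpos_of_pi_div_two_le_of_le hx (by linarith)
    nlinarith

lemma hasDerivAt_mul_cos_div_sin {x : ℝ} (hx : sin x ≠ 0) :
    HasDerivAt (fun τ => τ * cos τ / sin τ) ((sin x * cos x - x) / sin x ^ 2) x := by
  refine (((hasDerivAt_id' x).fun_mul (hasDerivAt_cos x)).div (hasDerivAt_sin x) hx).congr_deriv ?_
  field_simp
  linear_combination (-x) * sin_sq_add_cos_sq x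

lemma hasDerivAt_sin_mul_cos_sub_div_sin_sq {x : ℝ} (hx : sin x ≠ 0) :
    HasDerivAt (fun τ => (sin τ * cos τ - τ) / sin τ ^ 2)
      (2 * (x * cos x - sin x) / sin x ^ 3) x := by
  refine ((((hasDerivAt_sin x).fun_mul (hasDerivAt_cos x)).fun_sub (hasDerivAt_id' x)).div
    ((hasDerivAt_sin x).fun_pow 2) (pow_ne_zero 2 hx)).congr_deriv ?_
  field_simp
  linear_combination (-sin x ^ 2) * sin_sq_add_cos_sq x

lemma strictAntiOn_sin_mul_cos_sub_div_sin_sq :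
    StrictAntiOn (fun τ => (sin τ * cos τ - τ) / sin τ ^ 2) (Ioo 0 π) :=
  strictAntiOn_of_hasDerivAt_neg (convex_Ioo 0 π)
    (fun _ hx => hasDerivAt_sin_mul_cos_sub_div_sin_sq (sin_pos_of_mem_Ioo hx).ne')
    fun _ hx => div_neg_of_neg_of_pos
      (mul_neg_of_pos_of_neg two_pos (sub_neg.2 (mul_cos_lt_sin hx.1 hx.2)))
      (pow_pos (sin_pos_of_mem_Ioo hx) 3)

lemma strictAntiOn_mul_cos_div_sin :
    StrictAntiOn (fun τ => τ * cos τ / sin τ) (Ioo 0 π) :=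
  strictAntiOn_of_hasDerivAt_neg (convex_Ioo 0 π)
    (fun _ hx => hasDerivAt_mul_cos_div_sin (sin_pos_of_mem_Ioo hx).ne')
    fun _ hx => div_neg_of_neg_of_pos (sub_neg.2 (sin_mul_cos_lt_self hx.1))
      (pow_pos (sin_pos_of_mem_Ioo hx) 2)

lemma strictConcaveOn_mul_cos_div_sin :
    StrictConcaveOn ℝ (Ioo 0 π) (fun τ => τ * cos τ / sin τ) :=
  strictAntiOn_sin_mul_cos_sub_div_sin_sq.strictConcaveOn_of_hasDerivAt (convex_Ioo 0 π)
    fun _ hx => hasDerivAt_mul_cos_div_sin (sin_pos_of_mem_Ioo hx).ne'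

theorem tau_cot_anti_concave :
    AntitoneOn (fun τ : ℝ => τ * Real.cos τ / Real.sin τ) (Set.Ioo 0 (π / 2)) ∧
    ConcaveOn ℝ (Set.Ioo 0 (π / 2)) (fun τ : ℝ => τ * Real.cos τ / Real.sin τ) := by
  have hsub : Ioo 0 (π / 2) ⊆ Ioo 0 π := Ioo_subset_Ioo_right (by linarith [pi_pos])
  exact ⟨(strictAntiOn_mul_cos_div_sin.mono hsub).antitoneOn,
    (strictConcaveOn_mul_cos_div_sin.subset hsub (convex_Ioo 0 _)).concaveOn⟩
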